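/- Let n = 2m+1, R = ℂ[α,δ₁,…,δ_n]/(δ₁²,…,δ_n²), and suppose s ≥ m. Let 𝔞 be the ideal of R generated by α^s and all its images under even flip symmetries τ_J (|J| even). Then every homogeneous element f ∈ R of degree strictly greater than 2s (with deg α = deg δ_i = 2) lies in 𝔞. -/

import Mathlib

/-!
STATEMENT 10: Let `n = 2m+1`, `R = ℂ[α,δ₁,…,δ_n]/(δ₁²,…,δ_n²)`, and `s ≥ m`.
Let `𝔞` be the ideal of `R` generated by (the images of) `τ_J(α^s)` for all even
flip symmetries `τ_J` (`|J|` even).  Then every homogeneous element of `R` of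
(weighted) degree strictly greater than `2s` — with `deg α = deg δ_i = 2` — lies
in `𝔞`.  Homogeneous elements of `R` are images of weighted-homogeneous polynomials.
Variables: `X none = α`, `X (some i) = δ_i` in `MvPolynomial (Option (Fin n)) ℂ`.
-/

open MvPolynomial

/-- The flip symmetry `τ_J`: fixes `ω = α + (Σ δ_i)/2`, negates `δ_i` for `i ∈ J`. -/
noncomputable def Stmt10.tau {n : ℕ} (J : Finset (Fin n)) :
    MvPolynomial (Option (Fin n)) ℂ →ₐ[ℂ] MvPolynomial (Option (Fin n)) ℂ :=
  MvPolynomial.aeval fun v =>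
    match v with
    | none => X none + ∑ j ∈ J, X (some j)
    | some i => if i ∈ J then -X (some i) else X (some i)

/-- The ideal `(δ₁²,…,δ_n²)`. -/
noncomputable def Stmt10.sqIdeal (n : ℕ) : Ideal (MvPolynomial (Option (Fin n)) ℂ) :=
  Ideal.span (Set.range fun i : Fin n => (X (some i) : MvPolynomial (Option (Fin n)) ℂ) ^ 2)

/-
Write `a`, `dᵢ` for the images of `α`, `δᵢ` in `R`, so `dᵢ² = 0` and
`τ_J(α ^ s) = (a + ∑_{j ∈ J} dⱼ) ^ s`.
A monomial of degree at least `s + 1` in `R` is zero or a multiple of some `a ^ u * ∏_{j ∈ K} dⱼ`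
with `u + |K| = s + 1`. Because `dᵢ² = 0`, the product `dᵢ * (a + ∑_{j ∈ J} dⱼ) ^ s` does not
change when `i` is added to `J`, so `dᵢ` times any flip of `α ^ s`, even or odd, lies in `𝔞`.
For `i ∈ K` and `K' = K \ {i}` the alternating sum `∑_{J ⊆ K'} (-1)^|J| (a + ∑_{j ∈ J} dⱼ) ^ s`
is `± s (s - 1) ⋯ (s - |K'| + 1) a ^ (s - |K'|) ∏_{j ∈ K'} dⱼ`; multiplying it by `dᵢ` and
dividing by the falling factorial, which is nonzero as `|K'| ≤ s`, puts `a ^ u * ∏_{j ∈ K} dⱼ`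
in `𝔞`.
-/

open Finset

section SquareZero

variable {Q : Type*} [CommRing Q]

theorem add_pow_of_sq_eq_zero {c : Q} (hc : c ^ 2 = 0) (b : Q) (t : ℕ) :
    (b + c) ^ t = b ^ t + t * c * b ^ (t - 1) := by
  induction t with
  | zero => simp
  | succ t ih =>
    rw [pow_succ, ih]
    cases t with
    | zero => simp
    | succ t => push_cast; linear_combination (t + 1 : Q) * b ^ t * hc

theorem mul_add_pow_of_sq_eq_zero {c : Q} (hc : c ^ 2 = 0) (b : Q) (t : ℕ) :
    c * (b + c) ^ t = c * b ^ t := by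
  rw [add_pow_of_sq_eq_zero hc]
  linear_combination (t : Q) * b ^ (t - 1) * hc

variable {ι : Type*} {a : Q} {d : ι → Q}

def evenFlipIdeal (a : Q) (d : ι → Q) (s : ℕ) : Ideal Q :=
  Ideal.span ((fun J : Finset ι => (a + ∑ j ∈ J, d j) ^ s) '' {J | Even #J})

theorem add_sum_pow_mem_evenFlipIdeal {s : ℕ} {J : Finset ι} (hJ : Even #J) :
    (a + ∑ j ∈ J, d j) ^ s ∈ evenFlipIdeal a d s :=
  Ideal.subset_span ⟨J, hJ, rfl⟩

variable [DecidableEq ι]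

/-- Inclusion–exclusion over the flips: only the top term `∏ d j` of the binomial expansions
survives the alternating sum. -/
theorem sum_powerset_neg_one_pow_mul_add_sum_pow (hd : ∀ i, d i ^ 2 = 0) (K : Finset ι)
    (t : ℕ) :
    ∑ J ∈ K.powerset, (-1) ^ #J * (a + ∑ j ∈ J, d j) ^ t =
      (-1) ^ #K * t.descFactorial #K * (∏ j ∈ K, d j) * a ^ (t - #K) := by
  induction K using Finset.induction generalizing t with
  | empty => simp
  | @insert i K hi ih =>
    have hflip : ∀ J ∈ K.powerset, (-1) ^ #(insert i J) * (a + ∑ j ∈ insert i J, d j) ^ t =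
        -((-1) ^ #J * (a + ∑ j ∈ J, d j) ^ t) -
          t * d i * ((-1) ^ #J * (a + ∑ j ∈ J, d j) ^ (t - 1)) := by
      intro J hJ
      have hiJ : i ∉ J := fun h => hi (mem_powerset.mp hJ h)
      rw [card_insert_of_notMem hiJ, sum_insert hiJ, add_left_comm, add_comm (d i),
        add_pow_of_sq_eq_zero (hd i)]
      ring
    rw [sum_powerset_insert hi, sum_congr rfl hflip, sum_sub_distrib, sum_neg_distrib,
      ← mul_sum, ih, ih, card_insert_of_notMem hi, prod_insert hi]
    cases t with
    | zero => simp
    | succ t =>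
      rw [Nat.succ_descFactorial_succ, Nat.add_sub_cancel, Nat.succ_sub_succ]
      push_cast
      ring

theorem mul_add_sum_pow_mem_evenFlipIdeal {s : ℕ} {i : ι} (hd : d i ^ 2 = 0) {J : Finset ι}
    (hi : i ∉ J) : d i * (a + ∑ j ∈ J, d j) ^ s ∈ evenFlipIdeal a d s := by
  by_cases hJ : Even #J
  · exact Ideal.mul_mem_left _ _ (add_sum_pow_mem_evenFlipIdeal hJ)
  · rw [← mul_add_pow_of_sq_eq_zero hd, add_assoc, add_comm (∑ j ∈ J, d j), ← sum_insert hi]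
    refine Ideal.mul_mem_left _ _ (add_sum_pow_mem_evenFlipIdeal ?_)
    rwa [card_insert_of_notMem hi, Nat.even_add_one]

theorem pow_mul_prod_mem_evenFlipIdeal [Algebra ℚ Q] (hd : ∀ i, d i ^ 2 = 0) {s u : ℕ}
    {K : Finset ι} (h : u + #K = s + 1) : a ^ u * ∏ j ∈ K, d j ∈ evenFlipIdeal a d s := by
  rcases K.eq_empty_or_nonempty with rfl | ⟨i, hi⟩
  · obtain rfl : u = s + 1 := by simpa using h
    simpa [pow_succ'] using Ideal.mul_mem_left _ a (add_sum_pow_mem_evenFlipIdeal (d := d)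
      (s := s) (J := ∅) (by simp))
  set K' := K.erase i
  have hK' : #K' + 1 = #K := card_erase_add_one hi
  have hdesc : (s.descFactorial #K' : ℚ) ≠ 0 := by
    rw [Nat.cast_ne_zero, Ne, Nat.descFactorial_eq_zero_iff_lt]
    omega
  have hunit : IsUnit ((-1) ^ #K' * (s.descFactorial #K' : Q)) := by
    refine (isUnit_neg_one.pow _).mul ?_
    rw [← map_natCast (algebraMap ℚ Q)]
    exact (IsUnit.mk0 _ hdesc).map _
  have hexpand : (-1) ^ #K' * (s.descFactorial #K' : Q) * (a ^ u * (d i * ∏ j ∈ K', d j)) =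
      ∑ J ∈ K'.powerset, (-1) ^ #J * (d i * (a + ∑ j ∈ J, d j) ^ s) := by
    simp only [mul_left_comm _ (d i), ← mul_sum, sum_powerset_neg_one_pow_mul_add_sum_pow hd,
      show u = s - #K' by omega]
    ring
  rw [← Ideal.unit_mul_mem_iff_mem _ hunit, ← mul_prod_erase K d hi, hexpand]
  refine Ideal.sum_mem _ fun J hJ => Ideal.mul_mem_left _ _ ?_
  exact mul_add_sum_pow_mem_evenFlipIdeal (hd i) fun h => notMem_erase i K (mem_powerset.mp hJ h)

theorem pow_mul_prod_mem_evenFlipIdeal_of_le [Algebra ℚ Q] (hd : ∀ i, d i ^ 2 = 0) {s u : ℕ}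
    {K : Finset ι} (h : s + 1 ≤ u + #K) : a ^ u * ∏ j ∈ K, d j ∈ evenFlipIdeal a d s := by
  obtain ⟨K₀, hK₀, hcard⟩ := exists_subset_card_eq (min_le_left #K (s + 1))
  have hle : s + 1 - #K₀ ≤ u := by omega
  have hsplit : a ^ u * ∏ j ∈ K, d j =
      (a ^ (u - (s + 1 - #K₀)) * ∏ j ∈ K \ K₀, d j) * (a ^ (s + 1 - #K₀) * ∏ j ∈ K₀, d j) := by
    rw [← prod_sdiff hK₀, ← pow_sub_mul_pow a hle]
    ring
  rw [hsplit]
  exact Ideal.mul_mem_left _ _ (pow_mul_prod_mem_evenFlipIdeal hd (by omega))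

theorem pow_mul_prod_pow_mem_evenFlipIdeal [Algebra ℚ Q] [Fintype ι] (hd : ∀ i, d i ^ 2 = 0)
    {s u : ℕ} (e : ι → ℕ) (h : s + 1 ≤ u + ∑ i, e i) :
    a ^ u * ∏ i, d i ^ e i ∈ evenFlipIdeal a d s := by
  by_cases he : ∃ i, 2 ≤ e i
  · obtain ⟨i, hi⟩ := he
    rw [prod_eq_zero (mem_univ i) (pow_eq_zero_of_le hi (hd i) : d i ^ e i = 0), mul_zero]
    exact zero_mem _
  push Not at he
  have he01 : ∀ i, e i = 0 ∨ e i = 1 := fun i => by have := he i; omega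
  have hprod : ∏ i, d i ^ e i = ∏ i with e i = 1, d i := by
    rw [prod_filter]
    refine prod_congr rfl fun i _ => ?_
    rcases he01 i with h0 | h1 <;> simp [*]
  have hsum : ∑ i, e i = #{i | e i = 1} := by
    rw [card_filter]
    refine sum_congr rfl fun i _ => ?_
    rcases he01 i with h0 | h1 <;> simp [*]
  rw [hprod]
  exact pow_mul_prod_mem_evenFlipIdeal_of_le hd (hsum ▸ h)

end SquareZero

theorem aeval_mem_evenFlipIdeal {R Q ι : Type*} [CommSemiring R] [CommRing Q] [Algebra R Q]
    [Algebra ℚ Q] [Fintype ι] [DecidableEq ι] {x : Option ι → Q}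
    (hx : ∀ i, x (some i) ^ 2 = 0) {s : ℕ} {F : MvPolynomial (Option ι) R}
    (hF : ∀ σ ∈ F.support, s + 1 ≤ σ.degree) :
    aeval x F ∈ evenFlipIdeal (x none) (x ∘ some) s := by
  rw [F.as_sum, map_sum]
  refine Ideal.sum_mem _ fun σ hσ => ?_
  rw [aeval_monomial, Finsupp.prod_fintype _ _ (by simp), Fintype.prod_option]
  refine Ideal.mul_mem_left _ _ (pow_mul_prod_pow_mem_evenFlipIdeal hx (fun i => σ (some i)) ?_)
  simpa [Finsupp.degree_eq_sum, Fintype.sum_option] using hF σ hσ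

open Stmt10 in
theorem stmt10_general (n : ℕ) (s : ℕ)
    (d : ℕ) (hd : 2 * s < d)
    (F : MvPolynomial (Option (Fin n)) ℂ)
    (hF : F.IsWeightedHomogeneous (fun _ => 2) d) :
    Ideal.Quotient.mk (sqIdeal n) F ∈
      Ideal.span ((fun J : Finset (Fin n) =>
        Ideal.Quotient.mk (sqIdeal n)
          (tau J ((X none : MvPolynomial (Option (Fin n)) ℂ) ^ s))) ''
        {J | Even J.card}) := by
  set x : Option (Fin n) → MvPolynomial (Option (Fin n)) ℂ ⧸ sqIdeal n :=
    fun v => Ideal.Quotient.mk (sqIdeal n) (X v)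
  have hx : ∀ i, x (some i) ^ 2 = 0 := fun i => by
    rw [← map_pow, Ideal.Quotient.eq_zero_iff_mem]
    exact Ideal.subset_span ⟨i, rfl⟩
  have htau : ∀ J : Finset (Fin n), Ideal.Quotient.mk (sqIdeal n) (tau J (X none ^ s)) =
      (x none + ∑ j ∈ J, x (some j)) ^ s := fun J => by
    simp [tau, x]
  have hmk : Ideal.Quotient.mk (sqIdeal n) F = aeval x F := by
    rw [← Ideal.Quotient.mkₐ_eq_mk ℂ, aeval_unique (Ideal.Quotient.mkₐ ℂ (sqIdeal n))]
    rfl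
  simp only [htau, hmk]
  refine aeval_mem_evenFlipIdeal hx fun σ hσ => ?_
  have hweight := hF (mem_support_iff.mp hσ)
  have hdeg : Finsupp.weight (fun _ => 2) σ = 2 * σ.degree := by
    simp [Finsupp.weight_eq_sum, Finsupp.degree_eq_sum, ← mul_sum, mul_comm]
  omega

open Stmt10 in
theorem stmt10 (m n : ℕ) (hn : n = 2 * m + 1) (s : ℕ) (hs : m ≤ s)
    (d : ℕ) (hd : 2 * s < d)
    (F : MvPolynomial (Option (Fin n)) ℂ)
    (hF : F.IsWeightedHomogeneous (fun _ => 2) d) :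
    Ideal.Quotient.mk (sqIdeal n) F ∈
      Ideal.span ((fun J : Finset (Fin n) =>
        Ideal.Quotient.mk (sqIdeal n)
          (tau J ((X none : MvPolynomial (Option (Fin n)) ℂ) ^ s))) ''
        {J | Even J.card}) :=
  stmt10_general n s d hd F hF
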